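/- arXiv:1704.07291 — 8 statements merged into one kernel-verified Lean document; each statement's English description precedes it below -/
import Mathlib

section
/- Consider a 3-layer CBCN, i.e., a CBCN whose index set Fin n is partitioned into two sets P and Q with I = P (every layer-2 index is directly controlled) and such that ε j i = true implies j ∈ P and i ∈ Q. Then the CBCN is controllable if and only if every i ∈ Q has an in-neighbor j ∈ P (i.e., ε j i = true) whose out-degree is exactly one (i.e., i is the unique index k with ε j k = true). -/
def cbcnStep {n : ℕ} (ε : Fin n → Fin n → Bool) (I : Finset (Fin n))
    (u x : Fin n → Bool) : Fin n → Bool :=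
  fun i => if i ∈ I then u i else decide (∀ j : Fin n, ε j i = true → x j = true)

def cbcnTraj {n : ℕ} (ε : Fin n → Fin n → Bool) (I : Finset (Fin n))
    (u : ℕ → Fin n → Bool) (a : Fin n → Bool) : ℕ → Fin n → Bool
  | 0 => a
  | k + 1 => cbcnStep ε I (u k) (cbcnTraj ε I u a k)

def cbcnControllable {n : ℕ} (ε : Fin n → Fin n → Bool) (I : Finset (Fin n)) : Prop :=
  ∀ a b : Fin n → Bool, ∃ (N : ℕ) (u : ℕ → Fin n → Bool), cbcnTraj ε I u a N = b

/-- A 3-layer CBCN (layer 2 = `P`, all directly controlled; layer 3 = `Q`;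
all arcs go from `P` to `Q`) is controllable iff every vertex of `Q` has an
in-neighbor in `P` with out-degree exactly one. -/
theorem three_layer_controllability {n : ℕ} (ε : Fin n → Fin n → Bool)
    (P Q : Finset (Fin n))
    (hpart : ∀ i : Fin n, i ∈ Q ↔ i ∉ P)
    (hlayer : ∀ j i : Fin n, ε j i = true → j ∈ P ∧ i ∈ Q) :
    cbcnControllable ε P ↔
      ∀ i ∈ Q, ∃ j ∈ P, ε j i = true ∧ (∀ k : Fin n, ε j k = true ↔ k = i) := by
  classical
  constructor
  · intro hc
    by_contra hneg
    push_neg at hneg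
    obtain ⟨i₀, hi₀Q, hbad⟩ := hneg
    obtain ⟨N, u, hN⟩ := hc (fun _ => true) (fun k => decide (k ≠ i₀))
    match N, hN with
    | 0, hN =>
      have := congrFun hN i₀
      simp [cbcnTraj] at this
    | Nat.succ m, hN =>
      have hi₀P : i₀ ∉ P := (hpart i₀).mp hi₀Q
      have h0 : cbcnTraj ε P u (fun _ => true) (m+1) i₀ = false := by
        rw [hN]; simp
      have h0' : ∃ j : Fin n, ε j i₀ = true ∧
          cbcnTraj ε P u (fun _ => true) m j = false := by
        simp only [cbcnTraj, cbcnStep, if_neg hi₀P, decide_eq_false_iff_not] at h0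
        push_neg at h0
        obtain ⟨j, hj1, hj2⟩ := h0
        exact ⟨j, hj1, by simpa using hj2⟩
      obtain ⟨j, hji, hjf⟩ := h0'
      have hjP : j ∈ P := (hlayer j i₀ hji).1
      have := hbad j hjP hji
      obtain ⟨k, hk⟩ := this
      have hkey : ε j k = true ∧ k ≠ i₀ :=
        hk.resolve_right (by rintro ⟨he, rfl⟩; exact he hji)
      obtain ⟨hjk, hki₀⟩ := hkey
      have hkQ : k ∈ Q := (hlayer j k hjk).2
      have hkP : k ∉ P := (hpart k).mp hkQ
      have hfin : cbcnTraj ε P u (fun _ => true) (m+1) k = true := by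
        rw [hN]; simp [hki₀]
      simp only [cbcnTraj, cbcnStep, if_neg hkP, decide_eq_true_eq] at hfin
      have := hfin j hjk
      rw [hjf] at this
      exact absurd this (by simp)
  · intro h a b
    have h' : ∀ i : Fin n, ∃ j : Fin n,
        i ∈ Q → (ε j i = true ∧ ∀ k : Fin n, ε j k = true ↔ k = i) := by
      intro i
      by_cases hi : i ∈ Q
      · obtain ⟨j, _, hj1, hj2⟩ := h i hi
        exact ⟨j, fun _ => ⟨hj1, hj2⟩⟩
      · exact ⟨i, fun hq => absurd hq hi⟩
    choose f hf using h'
    set u0 : Fin n → Bool :=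
      fun j => !(decide (∃ i : Fin n, i ∈ Q ∧ b i = false ∧ f i = j)) with hu0
    refine ⟨2, fun t => if t = 0 then u0 else b, ?_⟩
    funext i
    have hstep2 : cbcnTraj ε P (fun t => if t = 0 then u0 else b) a 2
        = cbcnStep ε P b (cbcnTraj ε P (fun t => if t = 0 then u0 else b) a 1) := by
      simp [cbcnTraj]
    rw [hstep2]
    have htraj1 : ∀ j : Fin n, j ∈ P →
        cbcnTraj ε P (fun t => if t = 0 then u0 else b) a 1 j = u0 j := by
      intro j hj
      simp [cbcnTraj, cbcnStep, hj]
    by_cases hiP : i ∈ P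
    · simp [cbcnStep, hiP]
    · have hiQ : i ∈ Q := (hpart i).mpr hiP
      obtain ⟨hfi, hfu⟩ := hf i hiQ
      have hfiP : f i ∈ P := (hlayer (f i) i hfi).1
      simp only [cbcnStep, if_neg hiP]
      cases hb : b i with
      | false =>
        simp only [decide_eq_false_iff_not]
        intro hall
        have := hall (f i) hfi
        rw [htraj1 (f i) hfiP] at this
        rw [hu0] at this
        simp only [Bool.not_eq_true', decide_eq_false_iff_not] at this
        exact this ⟨i, hiQ, hb, rfl⟩
      | true =>
        simp only [decide_eq_true_eq]
        intro j hj
        rw [htraj1 j (hlayer j i hj).1, hu0]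
        simp only [Bool.not_eq_true', decide_eq_false_iff_not]
        rintro ⟨i', hi'Q, hbi', hfi'⟩
        obtain ⟨hfi'e, hfu'⟩ := hf i' hi'Q
        have : i = i' := (hfu' i).mp (hfi' ▸ hj)
        rw [this, hbi'] at hb
        exact absurd hb (by simp)
end

section
/- Consider a 3-layer CBCN (Fin n partitioned into P and Q with I = P, and ε j i = true implies j ∈ P and i ∈ Q) in which every i ∈ Q has an in-neighbor j ∈ P whose out-degree is exactly one. Then for every initial state a and every target state b there exists a sequence of four inputs u_0, u_1, u_2, u_3 such that the trajectory x_0 = a, x_{k+1} = F(u_k, x_k) satisfies x_4 = b; i.e., every target state is reachable from every initial state in exactly 4 steps. -/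
/-- In a 3-layer CBCN in which every layer-3 vertex has an in-neighbor in
layer 2 with out-degree exactly one, every target state is reachable from
every initial state in exactly 4 steps. -/
theorem three_layer_reach_in_four_steps {n : ℕ} (ε : Fin n → Fin n → Bool)
    (P Q : Finset (Fin n))
    (hpart : ∀ i : Fin n, i ∈ Q ↔ i ∉ P)
    (hlayer : ∀ j i : Fin n, ε j i = true → j ∈ P ∧ i ∈ Q)
    (hdeg : ∀ i ∈ Q, ∃ j ∈ P, ε j i = true ∧ (∀ k : Fin n, ε j k = true ↔ k = i)) :
    ∀ a b : Fin n → Bool, ∃ u : ℕ → Fin n → Bool, cbcnTraj ε P u a 4 = b := by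
  intro a b
  classical
  set v : Fin n → Bool := fun j =>
    decide (∀ i : Fin n, (∀ k : Fin n, ε j k = true ↔ k = i) → b i = true) with hv
  refine ⟨fun k => if k = 2 then v else b, ?_⟩
  funext i
  have hx3 : ∀ j : Fin n, j ∈ P →
      cbcnTraj ε P (fun k => if k = 2 then v else b) a 3 j = v j := by
    intro j hj
    simp [cbcnTraj, cbcnStep, hj]
  show cbcnStep ε P b (cbcnTraj ε P (fun k => if k = 2 then v else b) a 3) i = b i
  unfold cbcnStep
  by_cases hiP : i ∈ P
  · simp [hiP]
  · simp only [hiP, if_false]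
    cases hb : b i with
    | true =>
      simp only [decide_eq_true_iff]
      intro j hji
      rw [hx3 j (hlayer j i hji).1]
      simp only [hv, decide_eq_true_iff]
      intro i' hi'
      have : i = i' := (hi' i).mp hji
      rw [← this, hb]
    | false =>
      obtain ⟨j, hjP, hji, hded⟩ := hdeg i ((hpart i).mpr hiP)
      simp only [decide_eq_false_iff_not]
      intro hall
      have := hall j hji
      rw [hx3 j hjP] at this
      simp only [hv, decide_eq_true_iff] at this
      have := this i hded
      rw [hb] at this
      exact Bool.false_ne_true this
end

section
/- If a CBCN is controllable and ε i i = true for some index i (the i-th state-variable has a self-loop in the original conjunctive Boolean network), then i ∈ I, i.e., the i-th state-variable must be directly controlled. -/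
/-- In a controllable CBCN, every state-variable with a self-loop must be
directly controlled. -/
theorem self_loop_must_be_controlled {n : ℕ} (ε : Fin n → Fin n → Bool)
    (I : Finset (Fin n)) (hc : cbcnControllable ε I)
    (i : Fin n) (hself : ε i i = true) : i ∈ I := by
  by_contra hI
  obtain ⟨N, u, hN⟩ := hc (fun _ => false) (fun _ => true)
  have key : ∀ k, cbcnTraj ε I u (fun _ => false) k i = false := by
    intro k
    induction k with
    | zero => rfl
    | succ k ih =>
      simp only [cbcnTraj, cbcnStep, if_neg hI]
      simp only [decide_eq_false_iff_not]
      intro h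
      have := h i hself
      rw [ih] at this
      exact Bool.false_ne_true this
  have := key N
  rw [hN] at this
  simp at this
end

section
/- If a CBCN is controllable, then its dependency relation is acyclic: there is no nonempty finite sequence of indices i_1, …, i_k with i_{k+1} := i_1 such that for every t, there is an arc i_t → i_{t+1} of the dependency relation (i.e., i_{t+1} ∉ I and ε i_t i_{t+1} = true). -/
/-- The dependency relation of the CBCN: there is an arc `j → i`
iff `i ∉ I` and `ε j i = true`. -/
def depArc {n : ℕ} (ε : Fin n → Fin n → Bool) (I : Finset (Fin n))
    (j i : Fin n) : Prop :=
  i ∉ I ∧ ε j i = true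

/-- The dependency relation of a controllable CBCN is acyclic: there is no
nonempty cyclic sequence of indices (here of length `k + 1`, with indices
taken cyclically via the modular addition of `Fin (k + 1)`) along which every
consecutive pair is an arc of the dependency relation. -/
theorem controllable_acyclic {n : ℕ} (ε : Fin n → Fin n → Bool)
    (I : Finset (Fin n)) (hc : cbcnControllable ε I) :
    ¬ ∃ (k : ℕ) (c : Fin (k + 1) → Fin n),
        ∀ t : Fin (k + 1), depArc ε I (c t) (c (t + 1)) := by
  rintro ⟨k, c, hcyc⟩
  obtain ⟨N, u, hN⟩ := hc (fun _ => false) (fun _ => true)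
  have key : ∀ m, ∃ t, cbcnTraj ε I u (fun _ => false) m (c t) = false := by
    intro m
    induction m with
    | zero => exact ⟨0, rfl⟩
    | succ m ih =>
      obtain ⟨t, ht⟩ := ih
      obtain ⟨hnotI, harc⟩ := hcyc t
      refine ⟨t + 1, ?_⟩
      simp only [cbcnTraj, cbcnStep, if_neg hnotI, decide_eq_false_iff_not]
      intro h
      exact absurd (h (c t) harc) (by simp [ht])
  obtain ⟨t, ht⟩ := key N
  rw [hN] at ht
  simp at ht
end

section
/- Suppose a CBCN contains a cycle in its dependency relation: indices i_1, …, i_k (with i_{k+1} := i_1) such that for every t, i_{t+1} ∉ I and ε i_t i_{t+1} = true. Then for every initial state a with a_{i_t} = false for all t ∈ {1, …, k}, every input sequence u_0, u_1, …, and every time N, the trajectory x_0 = a, x_{m+1} = F(u_m, x_m) satisfies x_N(i_t) = false for at least one t ∈ {1, …, k}. In particular, the all-ones state is not reachable from such an initial state. -/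
/-- If a CBCN contains a cycle in its dependency relation (a cyclic sequence
`c` of length `k + 1`, with indices taken cyclically via the modular addition
of `Fin (k + 1)`), then from any initial state in which all state-variables on
the cycle are `false`, at every time at least one state-variable on the cycle
is `false`, for any input sequence. -/
theorem cycle_traps_zero {n : ℕ} (ε : Fin n → Fin n → Bool) (I : Finset (Fin n))
    (k : ℕ) (c : Fin (k + 1) → Fin n)
    (hcyc : ∀ t : Fin (k + 1), depArc ε I (c t) (c (t + 1)))
    (a : Fin n → Bool) (ha : ∀ t : Fin (k + 1), a (c t) = false) :
    ∀ (u : ℕ → Fin n → Bool) (N : ℕ),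
      ∃ t : Fin (k + 1), cbcnTraj ε I u a N (c t) = false := by
  intro u N
  induction N with
  | zero => exact ⟨0, ha 0⟩
  | succ N ih =>
    obtain ⟨t, ht⟩ := ih
    refine ⟨t + 1, ?_⟩
    obtain ⟨hI, hε⟩ := hcyc t
    show cbcnStep ε I (u N) (cbcnTraj ε I u a N) (c (t + 1)) = false
    simp only [cbcnStep, if_neg hI, decide_eq_false_iff_not]
    intro h
    exact absurd (h _ hε) (by simp [ht])
end

section
/- If a CBCN is controllable, then it has Property P: for every index i, either i ∈ I or there exists a channel j with an arc j → i in the dependency relation. -/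
/-- `j` is a channel: it has exactly one out-neighbor in the dependency
relation, and that out-neighbor is not `j` itself. -/
def IsChannel {n : ℕ} (ε : Fin n → Fin n → Bool) (I : Finset (Fin n))
    (j : Fin n) : Prop :=
  ∃ m : Fin n, m ≠ j ∧ depArc ε I j m ∧ ∀ k : Fin n, depArc ε I j k → k = m

/-- A controllable CBCN has Property P: every index is either directly
controlled, or has a channel as in-neighbor in the dependency relation. -/
theorem controllable_propertyP {n : ℕ} (ε : Fin n → Fin n → Bool)
    (I : Finset (Fin n)) (hc : cbcnControllable ε I) :
    ∀ i : Fin n, i ∈ I ∨ ∃ j : Fin n, IsChannel ε I j ∧ depArc ε I j i := by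
  intro i
  by_cases hI : i ∈ I
  · exact Or.inl hI
  right
  by_contra h
  push_neg at h
  by_cases hself : ε i i = true
  · -- self-loop on i: once false, always false
    obtain ⟨N, u, hN⟩ := hc (fun _ => false) (fun _ => true)
    have key : ∀ k, cbcnTraj ε I u (fun _ => false) k i = false := by
      intro k
      induction k with
      | zero => rfl
      | succ k ih =>
        show cbcnStep ε I (u k) (cbcnTraj ε I u (fun _ => false) k) i = false
        simp only [cbcnStep, if_neg hI, decide_eq_false_iff_not]
        intro hall
        have := hall i hself
        rw [ih] at this
        exact Bool.false_ne_true this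
    have := key N
    rw [hN] at this
    simp at this
  · -- no self-loop
    obtain ⟨N, u, hN⟩ := hc (fun _ => true) (fun m => decide (m ≠ i))
    cases N with
    | zero =>
      have := congrFun hN i
      simp [cbcnTraj] at this
    | succ N =>
      set x := cbcnTraj ε I u (fun _ => true)
      have hi : x (N + 1) i = false := by
        rw [hN]; simp
      have hstep : cbcnStep ε I (u N) (x N) i = false := hi
      simp only [cbcnStep, if_neg hI, decide_eq_false_iff_not] at hstep
      push_neg at hstep
      obtain ⟨j, hji, hjf⟩ := hstep
      replace hjf : x N j = false := Bool.eq_false_iff.mpr hjf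
      have hjne : j ≠ i := by rintro rfl; exact hself hji
      have harc : depArc ε I j i := ⟨hI, hji⟩
      have hnc : ¬ IsChannel ε I j := fun hch => h j hch harc
      rw [IsChannel] at hnc
      push_neg at hnc
      obtain ⟨k, hk, hki⟩ := hnc i (Ne.symm hjne) harc
      have hk1 : x (N + 1) k = false := by
        show cbcnStep ε I (u N) (x N) k = false
        simp only [cbcnStep, if_neg hk.1, decide_eq_false_iff_not]
        intro hall
        have := hall j hk.2
        rw [hjf] at this
        exact Bool.false_ne_true this
      rw [hN] at hk1
      simp [hki] at hk1
end

section
/- Let i be an index of a CBCN with i ∉ I, with no self-loop in the dependency relation (not an arc i → i), and such that every in-neighbor j of i in the dependency relation (j with an arc j → i) has at least one other out-neighbor k ≠ i in the dependency relation. Then the state b defined by b_i = false and b_m = true for all m ≠ i is never attained at any time N ≥ 1: for every initial state, every input sequence, and every N ≥ 1, the trajectory satisfies x_N ≠ b. -/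
/-- If `i ∉ I`, `i` has no self-loop in the dependency relation, and every
in-neighbor of `i` has another out-neighbor besides `i`, then the state which
is `false` exactly at `i` and `true` elsewhere is never attained at any
time `N ≥ 1`. -/
theorem unreachable_single_zero {n : ℕ} (ε : Fin n → Fin n → Bool)
    (I : Finset (Fin n)) (i : Fin n) (hiI : i ∉ I)
    (hself : ¬ depArc ε I i i)
    (hin : ∀ j : Fin n, depArc ε I j i → ∃ k : Fin n, k ≠ i ∧ depArc ε I j k) :
    ∀ (a : Fin n → Bool) (u : ℕ → Fin n → Bool) (N : ℕ), 1 ≤ N →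
      cbcnTraj ε I u a N ≠ (fun m => if m = i then false else true) := by
  intro a u N hN heq
  obtain ⟨m, rfl⟩ : ∃ m, N = m + 1 := ⟨N - 1, (Nat.succ_pred_eq_of_pos hN).symm⟩
  set x := cbcnTraj ε I u a m with hx
  have hstep : ∀ p, cbcnStep ε I (u m) x p = (if p = i then false else true) := by
    intro p; exact congrFun heq p
  have hi := hstep i
  simp [cbcnStep, hiI] at hi
  obtain ⟨j, hji, hxj⟩ := hi
  obtain ⟨k, hki, hkI, hjk⟩ := hin j ⟨hiI, hji⟩
  have hk := hstep k
  simp [cbcnStep, hkI, hki] at hk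
  have := hk j hjk
  rw [hxj] at this
  exact Bool.false_ne_true this
end

section
/- A CBCN is controllable if and only if its dependency relation is acyclic and the CBCN has Property P. -/
lemma step_false_of_arc {n : ℕ} {ε : Fin n → Fin n → Bool} {I : Finset (Fin n)}
    {u x : Fin n → Bool} {j i : Fin n}
    (h : depArc ε I j i) (hx : x j = false) :
    cbcnStep ε I u x i = false := by
  obtain ⟨hiI, hε⟩ := h
  simp only [cbcnStep, if_neg hiI, decide_eq_false_iff_not]
  intro hall
  have := hall j hε
  simp [hx] at this

lemma no_long_walk {n : ℕ} {ε : Fin n → Fin n → Bool} {I : Finset (Fin n)}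
    (hac : ¬ ∃ (k : ℕ) (c : Fin (k + 1) → Fin n),
        ∀ t : Fin (k + 1), depArc ε I (c t) (c (t + 1)))
    (v : ℕ → Fin n) (hv : ∀ t < n, depArc ε I (v t) (v (t + 1))) : False := by
  have key : ∀ p q : ℕ, p < q → q ≤ n → v p = v q → False := by
    intro p q hpq hqn hvpq
    apply hac
    refine ⟨q - p - 1, fun t => v (p + t.val), ?_⟩
    intro t
    show depArc ε I (v (p + t.val)) (v (p + ((t + 1 : Fin (q - p - 1 + 1))).val))
    have htlt : t.val < q - p - 1 + 1 := t.isLt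
    have hval : ((t + 1 : Fin (q - p - 1 + 1))).val = (t.val + 1) % (q - p - 1 + 1) := by
      rw [Fin.add_def, Fin.val_one']
      exact Nat.add_mod_mod _ _ _
    by_cases hcase : t.val = q - p - 1
    · -- wrap-around arc
      have h0 : ((t + 1 : Fin (q - p - 1 + 1))).val = 0 := by
        rw [hval, hcase]; simp
      have harc := hv (p + (q - p - 1)) (by omega)
      rw [show p + (q - p - 1) + 1 = q from by omega] at harc
      rw [← hvpq] at harc
      rw [h0, hcase]
      simpa using harc
    · have h1 : ((t + 1 : Fin (q - p - 1 + 1))).val = t.val + 1 := by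
        rw [hval, Nat.mod_eq_of_lt (by omega)]
      have harc := hv (p + t.val) (by omega)
      rw [h1, show p + (t.val + 1) = p + t.val + 1 from by omega]
      exact harc
  obtain ⟨a, b, hab, heq⟩ := Fintype.exists_ne_map_eq_of_card_lt
      (fun t : Fin (n + 1) => v t.val) (by simp)
  have hne : a.val ≠ b.val := fun e => hab (Fin.ext e)
  rcases Nat.lt_or_ge a.val b.val with h | h
  · exact key a.val b.val h (Nat.lt_succ_iff.mp b.isLt) heq
  · exact key b.val a.val (by omega) (Nat.lt_succ_iff.mp a.isLt) heq.symm

lemma traj_succ {n : ℕ} (ε : Fin n → Fin n → Bool) (I : Finset (Fin n))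
    (u : ℕ → Fin n → Bool) (a : Fin n → Bool) (k : ℕ) :
    cbcnTraj ε I u a (k + 1) = cbcnStep ε I (u k) (cbcnTraj ε I u a k) := rfl

lemma traj_congr {n : ℕ} (ε : Fin n → Fin n → Bool) (I : Finset (Fin n))
    (u u' : ℕ → Fin n → Bool) (a : Fin n → Bool) (N : ℕ)
    (h : ∀ k < N, u k = u' k) :
    cbcnTraj ε I u a N = cbcnTraj ε I u' a N := by
  induction N with
  | zero => rfl
  | succ N ih =>
    rw [traj_succ, traj_succ, ih (fun k hk => h k (by omega)), h N (by omega)]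

lemma exists_back_walk {n : ℕ} (ε : Fin n → Fin n → Bool) (I : Finset (Fin n))
    (a : Fin n → Bool) :
    ∀ (k : ℕ) (i : Fin n), cbcnTraj ε I (fun _ _ => true) a k i = false →
      ∃ v : ℕ → Fin n, v 0 = i ∧ ∀ t < k, depArc ε I (v (t + 1)) (v t) := by
  intro k
  induction k with
  | zero => intro i _; exact ⟨fun _ => i, rfl, by omega⟩
  | succ k ih =>
    intro i hi
    rw [traj_succ] at hi
    by_cases hiI : i ∈ I
    · simp [cbcnStep, hiI] at hi
    · simp only [cbcnStep, if_neg hiI, decide_eq_false_iff_not] at hi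
      push_neg at hi
      obtain ⟨j, hj, hjf⟩ := hi
      replace hjf : cbcnTraj ε I (fun _ _ => true) a k j = false := Bool.eq_false_iff.mpr hjf
      obtain ⟨v', hv0, hv⟩ := ih j hjf
      refine ⟨fun t => match t with | 0 => i | t + 1 => v' t, rfl, ?_⟩
      intro t ht
      match t with
      | 0 => show depArc ε I (v' 0) i; rw [hv0]; exact ⟨hiI, hj⟩
      | t + 1 => exact hv t (by omega)

lemma allTrue_after {n : ℕ} {ε : Fin n → Fin n → Bool} {I : Finset (Fin n)}
    (hac : ¬ ∃ (k : ℕ) (c : Fin (k + 1) → Fin n),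
        ∀ t : Fin (k + 1), depArc ε I (c t) (c (t + 1)))
    (a : Fin n → Bool) :
    cbcnTraj ε I (fun _ _ => true) a n = fun _ => true := by
  funext i
  by_contra h
  rw [Bool.not_eq_true] at h
  obtain ⟨v, _, hv⟩ := exists_back_walk ε I a n i h
  exact no_long_walk hac (fun t => v (n - t)) (fun t ht => by
    show depArc ε I (v (n - t)) (v (n - (t + 1)))
    have h1 : n - t = (n - (t + 1)) + 1 := by omega
    rw [h1]
    exact hv (n - (t + 1)) (by omega))

open Classical in
noncomputable def ySeq {n : ℕ} (ch : Fin n → Fin n) (I : Finset (Fin n))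
    (b : Fin n → Bool) : ℕ → Fin n → Bool
  | 0 => b
  | s + 1 => fun m =>
      if ∃ i, ySeq ch I b s i = false ∧ i ∉ I ∧ ch i = m then false else true

lemma ySeq_step {n : ℕ} {ε : Fin n → Fin n → Bool} {I : Finset (Fin n)}
    {ch : Fin n → Fin n} {b : Fin n → Bool}
    (hch : ∀ i : Fin n, i ∉ I → IsChannel ε I (ch i) ∧ depArc ε I (ch i) i)
    (s : ℕ) :
    cbcnStep ε I (ySeq ch I b s) (ySeq ch I b (s + 1)) = ySeq ch I b s := by
  funext i
  by_cases hi : i ∈ I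
  · simp [cbcnStep, hi]
  · simp only [cbcnStep, if_neg hi]
    cases hsi : ySeq ch I b s i with
    | false =>
      apply decide_eq_false
      intro hall
      have h1 := hall (ch i) (hch i hi).2.2
      have h2 : ySeq ch I b (s + 1) (ch i) = false := by
        show (if ∃ i', ySeq ch I b s i' = false ∧ i' ∉ I ∧ ch i' = ch i then false else true) = false
        rw [if_pos ⟨i, hsi, hi, rfl⟩]
      rw [h2] at h1
      exact absurd h1 (by simp)
    | true =>
      apply decide_eq_true
      intro j hj
      by_contra hjf
      replace hjf : ySeq ch I b (s + 1) j = false := Bool.eq_false_iff.mpr hjf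
      have hex : ∃ i', ySeq ch I b s i' = false ∧ i' ∉ I ∧ ch i' = j := by
        by_contra hne
        rw [show ySeq ch I b (s + 1) j =
          (if ∃ i', ySeq ch I b s i' = false ∧ i' ∉ I ∧ ch i' = j then false else true) from rfl,
          if_neg hne] at hjf
        exact absurd hjf (by simp)
      obtain ⟨i', hi'f, hi'I, hchi'⟩ := hex
      obtain ⟨m, hmne, hmarc, huniq⟩ := (hch i' hi'I).1
      have e1 : i = m := huniq i ⟨hi, by rw [hchi']; exact hj⟩
      have e2 : i' = m := huniq i' (hch i' hi'I).2
      rw [e1, ← e2, hi'f] at hsi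
      exact absurd hsi (by simp)

lemma ySeq_exists_fwd_walk {n : ℕ} {ε : Fin n → Fin n → Bool} {I : Finset (Fin n)}
    {ch : Fin n → Fin n} {b : Fin n → Bool}
    (hch : ∀ i : Fin n, i ∉ I → IsChannel ε I (ch i) ∧ depArc ε I (ch i) i) :
    ∀ (s : ℕ) (m : Fin n), ySeq ch I b s m = false →
      ∃ v : ℕ → Fin n, v 0 = m ∧ ∀ t < s, depArc ε I (v t) (v (t + 1)) := by
  intro s
  induction s with
  | zero => intro m _; exact ⟨fun _ => m, rfl, by omega⟩
  | succ s ih =>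
    intro m hm
    have hex : ∃ i', ySeq ch I b s i' = false ∧ i' ∉ I ∧ ch i' = m := by
      by_contra hne
      rw [show ySeq ch I b (s + 1) m =
        (if ∃ i', ySeq ch I b s i' = false ∧ i' ∉ I ∧ ch i' = m then false else true) from rfl,
        if_neg hne] at hm
      exact absurd hm (by simp)
    obtain ⟨i', hi'f, hi'I, hchi'⟩ := hex
    obtain ⟨v', hv0, hv⟩ := ih i' hi'f
    refine ⟨fun t => match t with | 0 => m | t + 1 => v' t, rfl, ?_⟩
    intro t ht
    match t with
    | 0 =>
      show depArc ε I m (v' 0)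
      rw [hv0, ← hchi']
      exact (hch i' hi'I).2
    | t + 1 => exact hv t (by omega)

lemma ySeq_allTrue {n : ℕ} {ε : Fin n → Fin n → Bool} {I : Finset (Fin n)}
    {ch : Fin n → Fin n} {b : Fin n → Bool}
    (hac : ¬ ∃ (k : ℕ) (c : Fin (k + 1) → Fin n),
        ∀ t : Fin (k + 1), depArc ε I (c t) (c (t + 1)))
    (hch : ∀ i : Fin n, i ∉ I → IsChannel ε I (ch i) ∧ depArc ε I (ch i) i) :
    ySeq ch I b n = fun _ => true := by
  funext m
  by_contra h
  replace h : ySeq ch I b n m = false := Bool.eq_false_iff.mpr h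
  obtain ⟨v, _, hv⟩ := ySeq_exists_fwd_walk hch n m h
  exact no_long_walk hac v hv

/-- A CBCN is controllable iff its dependency relation is acyclic and it has
Property P. -/
theorem controllable_iff_acyclic_and_propertyP {n : ℕ}
    (ε : Fin n → Fin n → Bool) (I : Finset (Fin n)) :
    cbcnControllable ε I ↔
      (¬ ∃ (k : ℕ) (c : Fin (k + 1) → Fin n),
          ∀ t : Fin (k + 1), depArc ε I (c t) (c (t + 1))) ∧
      (∀ i : Fin n, i ∈ I ∨ ∃ j : Fin n, IsChannel ε I j ∧ depArc ε I j i) := by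
  constructor
  · intro hctrl
    have hac : ¬ ∃ (k : ℕ) (c : Fin (k + 1) → Fin n),
        ∀ t : Fin (k + 1), depArc ε I (c t) (c (t + 1)) := by
      rintro ⟨k, c, hc⟩
      obtain ⟨N, u, hN⟩ := hctrl (fun _ => false) (fun _ => true)
      have key : ∀ m, ∃ t : Fin (k + 1),
          cbcnTraj ε I u (fun _ => false) m (c t) = false := by
        intro m
        induction m with
        | zero => exact ⟨0, rfl⟩
        | succ m ih =>
          obtain ⟨t, ht⟩ := ih
          exact ⟨t + 1, step_false_of_arc (hc t) ht⟩
      obtain ⟨t, ht⟩ := key N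
      rw [hN] at ht
      exact absurd ht (by simp)
    refine ⟨hac, ?_⟩
    intro i
    by_contra hcon
    push_neg at hcon
    obtain ⟨hiI, hnoch⟩ := hcon
    obtain ⟨N, u, hN⟩ := hctrl (fun _ => true) (fun m => decide (m ≠ i))
    match N with
    | 0 =>
      have := congrFun hN i
      simp [cbcnTraj] at this
    | N + 1 =>
      rw [traj_succ] at hN
      set x := cbcnTraj ε I u (fun _ => true) N with hx
      have hfi : cbcnStep ε I (u N) x i = false := by rw [hN]; simp
      rw [show cbcnStep ε I (u N) x i
          = (if i ∈ I then u N i else decide (∀ j : Fin n, ε j i = true → x j = true)) from rfl,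
        if_neg hiI] at hfi
      rw [decide_eq_false_iff_not] at hfi
      push_neg at hfi
      obtain ⟨j, hj, hjf⟩ := hfi
      replace hjf : x j = false := Bool.eq_false_iff.mpr hjf
      have hji : j ≠ i := by
        rintro rfl
        exact hac ⟨0, fun _ => j, fun _ => ⟨hiI, hj⟩⟩
      refine hnoch j ⟨i, hji.symm, ⟨hiI, hj⟩, ?_⟩ ⟨hiI, hj⟩
      intro m hm
      by_contra hmi
      have hbm : cbcnStep ε I (u N) x m = false := step_false_of_arc hm hjf
      rw [hN] at hbm
      simp [hmi] at hbm
  · rintro ⟨hac, hP⟩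
    intro a b
    have hch' : ∀ i : Fin n, ∃ j, i ∉ I → IsChannel ε I j ∧ depArc ε I j i := by
      intro i
      rcases hP i with h | ⟨j, hj⟩
      · exact ⟨i, fun hi => absurd h hi⟩
      · exact ⟨j, fun _ => hj⟩
    choose ch hch using hch'
    refine ⟨2 * n,
      (fun k => if k < n then (fun _ => true) else ySeq ch I b (2 * n - 1 - k)), ?_⟩
    set u : ℕ → Fin n → Bool :=
      fun k => if k < n then (fun _ => true) else ySeq ch I b (2 * n - 1 - k) with hu
    have h1 : cbcnTraj ε I u a n = fun _ => true := by
      rw [traj_congr ε I u (fun _ _ => true) a n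
        (fun k hk => by simp [hu, hk])]
      exact allTrue_after hac a
    have h2 : ∀ r, r ≤ n → cbcnTraj ε I u a (n + r) = ySeq ch I b (n - r) := by
      intro r
      induction r with
      | zero =>
        intro _
        rw [Nat.add_zero, Nat.sub_zero, h1, ySeq_allTrue hac hch]
      | succ r ih =>
        intro hr
        rw [show n + (r + 1) = (n + r) + 1 from rfl, traj_succ, ih (by omega)]
        have hur : u (n + r) = ySeq ch I b (n - (r + 1)) := by
          have h3 : ¬ (n + r < n) := by omega
          have h4 : 2 * n - 1 - (n + r) = n - (r + 1) := by omega
          simp only [hu]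
          rw [if_neg h3, h4]
        rw [hur, show n - r = (n - (r + 1)) + 1 from by omega]
        exact ySeq_step hch _
    have := h2 n le_rfl
    rw [show n + n = 2 * n from by omega, Nat.sub_self] at this
    exact this
end
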